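/- Let α be a countable ordinal and let I and J be interpretations with I ⊑_α J. Then for every formula φ and every variable assignment h: (1) for every truth value w with F_0 ≤ w ≤ F_α, if ⟦φ⟧^J_h = w then ⟦φ⟧^I_h = w; (2) for every truth value w with T_α ≤ w ≤ T_0, if ⟦φ⟧^I_h = w then ⟦φ⟧^J_h = w; (3) for every truth value w with deg(w) < α, ⟦φ⟧^I_h = w if and only if ⟦φ⟧^J_h = w. -/

import Mathlib

/-!
Infinite-valued semantics for formula-based logic programs
(Rondogiannis–Wadge style), following Lüdecke,
"Every Formula-Based Logic Program Has a Least Infinite-Valued Model".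
-/

noncomputable section

namespace ILP

attribute [local instance] Classical.propDecidable

/-- The first uncountable ordinal. -/
def omega1 : Ordinal.{0} := Ordinal.omega 1

lemma omega1_isLimit : Order.IsSuccLimit omega1 := Cardinal.isSuccLimit_omega 1

lemma zero_lt_omega1 : (0 : Ordinal) < omega1 := omega1_isLimit.pos

lemma succ_lt_omega1 {a : Ordinal} (h : a < omega1) : a + 1 < omega1 := by
  rw [Ordinal.add_one_eq_succ]
  exact omega1_isLimit.succ_lt h

/-- Pre-truth-values: `F α`, `0`, `T α` for arbitrary ordinals `α`. -/
inductive TVPre : Type 1 where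
  | F : Ordinal → TVPre
  | zero : TVPre
  | T : Ordinal → TVPre

/-- A pre-truth-value is countable if its index is a countable ordinal. -/
def TVPre.countable : TVPre → Prop
  | .F a => a < omega1
  | .zero => True
  | .T a => a < omega1

/-- The set `W` of truth values:
`F_α` (false values) for countable `α`, `0`, and `T_α` (true values) for countable `α`. -/
def W : Type 1 := {v : TVPre // v.countable}

/-- The strict order on truth values:
`F_0 < F_1 < ... < 0 < ... < T_1 < T_0`. -/
def TVPre.lt : TVPre → TVPre → Prop
  | .F a, .F b => a < b
  | .F _, .zero => True
  | .F _, .T _ => True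
  | .zero, .T _ => True
  | .T a, .T b => b < a
  | _, _ => False

instance : LT W := ⟨fun x y => TVPre.lt x.1 y.1⟩

instance : LE W := ⟨fun x y => x = y ∨ x < y⟩

lemma TVPre.lt_trans {a b c : TVPre} (hab : a.lt b) (hbc : b.lt c) : a.lt c := by
  cases a <;> cases b <;> cases c <;> simp_all [TVPre.lt] <;>
    first | exact hab.trans hbc | exact hbc.trans hab

lemma TVPre.lt_irrefl {a : TVPre} (h : a.lt a) : False := by
  cases a <;> simp_all [TVPre.lt]

instance instLinearOrderW : LinearOrder W where
  le_refl a := Or.inl rfl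
  le_trans a b c hab hbc := by
    rcases hab with rfl | hab
    · exact hbc
    rcases hbc with rfl | hbc
    · exact Or.inr hab
    · exact Or.inr (TVPre.lt_trans hab hbc)
  le_antisymm a b hab hba := by
    rcases hab with rfl | hab
    · rfl
    rcases hba with rfl | hba
    · rfl
    exact absurd (TVPre.lt_trans hab hba) TVPre.lt_irrefl
  le_total a b := by
    obtain ⟨a1, ha⟩ := a
    obtain ⟨b1, hb⟩ := b
    have tri : a1 = b1 ∨ a1.lt b1 ∨ b1.lt a1 := by
      cases a1 <;> cases b1 <;> simp [TVPre.lt] <;> (try rename_i x y) <;>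
        (try rcases lt_trichotomy x y with h | h | h) <;> tauto
    rcases tri with h | h | h
    · exact Or.inl (Or.inl (Subtype.ext h))
    · exact Or.inl (Or.inr h)
    · exact Or.inr (Or.inr h)
  lt_iff_le_not_ge a b := by
    constructor
    · intro h
      refine ⟨Or.inr h, ?_⟩
      rintro (rfl | h')
      · exact TVPre.lt_irrefl h
      · exact TVPre.lt_irrefl (TVPre.lt_trans h h')
    · rintro ⟨rfl | h, h2⟩
      · exact absurd (Or.inl rfl) h2
      · exact h
  toDecidableLE := Classical.decRel _

/-- The false value `F_α`. -/
def WF (a : Ordinal) (h : a < omega1) : W := ⟨.F a, h⟩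

/-- The true value `T_α`. -/
def WT (a : Ordinal) (h : a < omega1) : W := ⟨.T a, h⟩

/-- The undefined value `0`. -/
def WZ : W := ⟨.zero, trivial⟩

/-- `deg w < α` : the degree of `w` (which is `∞` for `0`) is less than `α`. -/
def degLT (w : W) (α : Ordinal) : Prop :=
  match w.1 with
  | .F a => a < α
  | .zero => False
  | .T a => a < α

/-- The set of indices of true values occurring in `M`. -/
def TIdx (M : Set W) : Set Ordinal := {a | ∃ w ∈ M, w.1 = TVPre.T a}

/-- The set of indices of false values occurring in `M`. -/
def FIdx (M : Set W) : Set Ordinal := {a | ∃ w ∈ M, w.1 = TVPre.F a}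

lemma mem_lt_omega1_of_TIdx {M : Set W} {a : Ordinal} (h : a ∈ TIdx M) : a < omega1 := by
  obtain ⟨w, _, hw⟩ := h
  have := w.2
  rw [hw] at this
  exact this

lemma mem_lt_omega1_of_FIdx {M : Set W} {a : Ordinal} (h : a ∈ FIdx M) : a < omega1 := by
  obtain ⟨w, _, hw⟩ := h
  have := w.2
  rw [hw] at this
  exact this

/-- The least upper bound of a subset of `W`. -/
def Wsup (M : Set W) : W :=
  if h : (TIdx M).Nonempty then
    WT (sInf (TIdx M))
      (lt_of_le_of_lt (csInf_le' h.choose_spec) (mem_lt_omega1_of_TIdx h.choose_spec))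
  else if WZ ∈ M then WZ
  else if h2 : sSup (FIdx M) < omega1 then WF (sSup (FIdx M)) h2
  else WZ

/-- The greatest lower bound of a subset of `W`. -/
def Winf (M : Set W) : W :=
  if h : (FIdx M).Nonempty then
    WF (sInf (FIdx M))
      (lt_of_le_of_lt (csInf_le' h.choose_spec) (mem_lt_omega1_of_FIdx h.choose_spec))
  else if WZ ∈ M then WZ
  else if h2 : sSup (TIdx M) < omega1 then WT (sSup (TIdx M)) h2
  else WZ

/-- The semantics of negation on `W`. -/
def Wneg : W → W
  | ⟨.F a, h⟩ => WT (a + 1) (succ_lt_omega1 h)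
  | ⟨.zero, _⟩ => WZ
  | ⟨.T a, h⟩ => WF (a + 1) (succ_lt_omega1 h)

/-! ### Syntax -/

/-- A first-order language with finitely many predicate symbols (at least one),
finitely many function symbols and finitely many constants (at least one). -/
structure Language where
  nPred : ℕ
  predAr : Fin nPred → ℕ
  nFun : ℕ
  funAr : Fin nFun → ℕ
  nConst : ℕ
  npos : 1 ≤ nPred
  cpos : 1 ≤ nConst

variable {L : Language}

/-- Terms of the language; variables are indexed by natural numbers. -/
inductive Term (L : Language) : Type where
  | var : ℕ → Term L
  | const : Fin L.nConst → Term L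
  | func : (f : Fin L.nFun) → (Fin (L.funAr f) → Term L) → Term L

/-- A term is ground if it contains no variables. -/
def Term.ground : Term L → Prop
  | .var _ => False
  | .const _ => True
  | .func _ ts => ∀ i, (ts i).ground

/-- The Herbrand universe: the set of ground terms. -/
def HU (L : Language) : Type := {t : Term L // t.ground}

/-- Formulas of the language. -/
inductive Formula (L : Language) : Type where
  | verum : Formula L
  | falsum : Formula L
  | atom : (p : Fin L.nPred) → (Fin (L.predAr p) → Term L) → Formula L
  | neg : Formula L → Formula L
  | conj : Formula L → Formula L → Formula L
  | disj : Formula L → Formula L → Formula L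
  | all : ℕ → Formula L → Formula L
  | ex : ℕ → Formula L → Formula L

/-- A ground atom: a predicate symbol applied to ground terms.
The Herbrand base `H_B` is the type of ground atoms. -/
structure GroundAtom (L : Language) : Type where
  pred : Fin L.nPred
  args : Fin (L.predAr pred) → HU L

/-- An (infinite-valued Herbrand) interpretation. -/
def Interp (L : Language) : Type 1 := GroundAtom L → W

/-- Evaluation of a term under a variable assignment. -/
def Term.evalT (h : ℕ → HU L) : Term L → HU L
  | .var n => h n
  | .const c => ⟨.const c, trivial⟩
  | .func f ts => ⟨.func f fun i => ((ts i).evalT h).1, fun i => ((ts i).evalT h).2⟩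

/-- The infinite-valued semantics of formulas, relative to an interpretation and
a variable assignment. -/
def Formula.eval (I : Interp L) : Formula L → (ℕ → HU L) → W
  | .verum, _ => WT 0 zero_lt_omega1
  | .falsum, _ => WF 0 zero_lt_omega1
  | .atom p ts, h => I ⟨p, fun i => (ts i).evalT h⟩
  | .neg φ, h => Wneg (φ.eval I h)
  | .conj φ ψ, h => min (φ.eval I h) (ψ.eval I h)
  | .disj φ ψ, h => max (φ.eval I h) (ψ.eval I h)
  | .ex v φ, h => Wsup (Set.range fun u : HU L => φ.eval I (Function.update h v u))
  | .all v φ, h => Winf (Set.range fun u : HU L => φ.eval I (Function.update h v u))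

/-- The variables occurring in a term. -/
def Term.vars : Term L → Set ℕ
  | .var n => {n}
  | .const _ => ∅
  | .func _ ts => ⋃ i, (ts i).vars

/-- The free variables of a formula. -/
def Formula.freeVars : Formula L → Set ℕ
  | .verum => ∅
  | .falsum => ∅
  | .atom _ ts => ⋃ i, (ts i).vars
  | .neg φ => φ.freeVars
  | .conj φ ψ => φ.freeVars ∪ ψ.freeVars
  | .disj φ ψ => φ.freeVars ∪ ψ.freeVars
  | .all v φ => φ.freeVars \ {v}
  | .ex v φ => φ.freeVars \ {v}

/-- Applying a substitution to a term. -/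
def Term.subst (σ : ℕ → Term L) : Term L → Term L
  | .var n => σ n
  | .const c => .const c
  | .func f ts => .func f fun i => (ts i).subst σ

/-- Applying a substitution to a formula (bound variables are not substituted). -/
def Formula.subst (σ : ℕ → Term L) : Formula L → Formula L
  | .verum => .verum
  | .falsum => .falsum
  | .atom p ts => .atom p fun i => (ts i).subst σ
  | .neg φ => .neg (φ.subst σ)
  | .conj φ ψ => .conj (φ.subst σ) (ψ.subst σ)
  | .disj φ ψ => .disj (φ.subst σ) (ψ.subst σ)
  | .all v φ => .all v (φ.subst (Function.update σ v (Term.var v)))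
  | .ex v φ => .ex v (φ.subst (Function.update σ v (Term.var v)))

/-- A formula-based rule `A ← φ`: the head is an atom `P(t₁,…,tₛ)`
(hence distinct from `⊤` and `⊥`) and the body is an arbitrary formula. -/
structure Rule (L : Language) : Type where
  headPred : Fin L.nPred
  headArgs : Fin (L.predAr headPred) → Term L
  body : Formula L

/-- The head of a rule, as an atomic formula. -/
def Rule.headAtom (r : Rule L) : Formula L := .atom r.headPred r.headArgs

/-- A formula-based logic program: a finite set of formula-based rules. -/
structure Program (L : Language) : Type where
  rules : Set (Rule L)
  finite : rules.Finite

/-- The set `P_G` of ground instances of a program `P`: pairs `(Aσ, φσ)` obtained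
from a rule `A ← φ` of `P` and a substitution `σ` such that `Aσ` is a ground atom
and `φσ` has no free variables. -/
def groundInstances (P : Program L) : Set (GroundAtom L × Formula L) :=
  {Aφ | ∃ r ∈ P.rules, ∃ σ : ℕ → Term L,
    (∃ hg : ∀ i, ((r.headArgs i).subst σ).ground,
      Aφ.1 = ⟨r.headPred, fun i => ⟨(r.headArgs i).subst σ, hg i⟩⟩) ∧
    Aφ.2 = r.body.subst σ ∧ (r.body.subst σ).freeVars = ∅}

/-- A default variable assignment (possible since there is at least one constant). -/
def defaultAssignment (L : Language) : ℕ → HU L :=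
  fun _ => ⟨.const ⟨0, L.cpos⟩, trivial⟩

/-- The value of a closed formula (independent of the variable assignment). -/
def Formula.evalClosed (I : Interp L) (φ : Formula L) : W :=
  φ.eval I (defaultAssignment L)

/-- The immediate consequence operator `T_P`. -/
def TP (P : Program L) (I : Interp L) : Interp L :=
  fun A => Wsup {w | ∃ φ : Formula L, (A, φ) ∈ groundInstances P ∧ w = φ.evalClosed I}

/-- `I ∥ F_β` : the set of ground atoms receiving value `F_β` under `I`. -/
def Ifalse (I : Interp L) (β : Ordinal) : Set (GroundAtom L) := {A | (I A).1 = TVPre.F β}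

/-- `I ∥ T_β` : the set of ground atoms receiving value `T_β` under `I`. -/
def Itrue (I : Interp L) (β : Ordinal) : Set (GroundAtom L) := {A | (I A).1 = TVPre.T β}

/-- `I =_α J`. -/
def eqa (α : Ordinal) (I J : Interp L) : Prop :=
  ∀ β ≤ α, Ifalse I β = Ifalse J β ∧ Itrue I β = Itrue J β

/-- `I ⊑_α J`. -/
def sqa (α : Ordinal) (I J : Interp L) : Prop :=
  (∀ β < α, eqa β I J) ∧ Ifalse J α ⊆ Ifalse I α ∧ Itrue I α ⊆ Itrue J α

/-- `I ⊏_α J`. -/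
def sqlt (α : Ordinal) (I J : Interp L) : Prop := sqa α I J ∧ ¬ eqa α I J

/-- `I ⊑_∞ J`. -/
def sqinf (I J : Interp L) : Prop := I = J ∨ ∃ α < omega1, sqlt α I J

/-- `I` satisfies the rule `A ← φ`. -/
def satisfies (I : Interp L) (r : Rule L) : Prop :=
  ∀ h : ℕ → HU L, r.body.eval I h ≤ r.headAtom.eval I h

/-- `I` is a model of `P`. -/
def isModel (I : Interp L) (P : Program L) : Prop := ∀ r ∈ P.rules, satisfies I r

/-- The transfinite iterates `T^β_{P,α}(I)`. -/
def iter (P : Program L) (α : Ordinal) (hα : α < omega1) (I : Interp L)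
    (β : Ordinal) : Interp L :=
  Ordinal.limitRecOn β I (fun _ J => TP P J)
    (fun β _ ih A =>
      if degLT (I A) α then I A
      else if ∃ γ, ∃ hγ : γ < β, (ih γ hγ A).1 = TVPre.T α then WT α hα
      else if ∀ γ, ∀ hγ : γ < β, (ih γ hγ A).1 = TVPre.F α then WF α hα
      else WF (α + 1) (succ_lt_omega1 hα))

/-- The union `⊔_{γ<α} I_γ` of a family of interpretations. -/
def unionInterp (α : Ordinal) (hα : α < omega1) (Ig : ∀ γ, γ < α → Interp L) :
    Interp L := fun A =>
  if h : ∃ ζ, ∃ hζ : ζ < α, ((Ig ζ hζ) A).1 = TVPre.F ζ ∨ ((Ig ζ hζ) A).1 = TVPre.T ζ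
  then Ig h.choose h.choose_spec.choose A
  else WF α hα

/-- The approximants `M_α` of a program `P`. -/
def approx (P : Program L) (α : Ordinal) : Interp L :=
  if hα : α < omega1 then
    if (∀ γ, ∀ _ : γ < α, ∀ ζ, ζ < γ → eqa ζ (approx P ζ) (approx P γ)) ∧
        sqa α (unionInterp α hα fun γ _ => approx P γ)
          (TP P (unionInterp α hα fun γ _ => approx P γ))
    then iter P α hα (unionInterp α hα fun γ _ => approx P γ) omega1
    else fun _ => WF 0 zero_lt_omega1
  else fun _ => WF 0 zero_lt_omega1
termination_by α
decreasing_by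
  all_goals first | assumption | exact lt_trans ‹_› ‹_›

/-- The depth `δ_P` of a program `P`. -/
def depth (P : Program L) : Ordinal :=
  sInf {δ | δ < omega1 ∧ ∀ γ, δ ≤ γ → γ < omega1 →
    Ifalse (approx P γ) γ = ∅ ∧ Itrue (approx P γ) γ = ∅}

/-- The least infinite-valued model `M_P` of a program `P`. -/
def MP (P : Program L) : Interp L := fun A =>
  if degLT (approx P (depth P) A) (depth P) then approx P (depth P) A else WZ

/-! ### Three-valued semantics -/

/-- The three truth values `F < 0 < T`. -/
inductive TV3 : Type where
  | F : TV3
  | Z : TV3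
  | T : TV3
deriving DecidableEq

/-- Numeric coding of the three truth values. -/
def TV3.toNat : TV3 → ℕ
  | .F => 0
  | .Z => 1
  | .T => 2

instance : LinearOrder TV3 :=
  LinearOrder.lift' TV3.toNat (fun a b => by
    cases a <;> cases b <;> simp [TV3.toNat])

/-- A three-valued interpretation. -/
def Interp3 (L : Language) : Type := GroundAtom L → TV3

/-- Supremum of a set of three-valued truth values. -/
def sup3 (S : Set TV3) : TV3 :=
  if TV3.T ∈ S then .T else if TV3.Z ∈ S then .Z else .F

/-- Infimum of a set of three-valued truth values. -/
def inf3 (S : Set TV3) : TV3 :=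
  if TV3.F ∈ S then .F else if TV3.Z ∈ S then .Z else .T

/-- Three-valued negation. -/
def neg3 : TV3 → TV3
  | .F => .T
  | .Z => .Z
  | .T => .F

/-- The three-valued semantics of formulas. -/
def Formula.eval3 (K : Interp3 L) : Formula L → (ℕ → HU L) → TV3
  | .verum, _ => .T
  | .falsum, _ => .F
  | .atom p ts, h => K ⟨p, fun i => (ts i).evalT h⟩
  | .neg φ, h => neg3 (φ.eval3 K h)
  | .conj φ ψ, h => min (φ.eval3 K h) (ψ.eval3 K h)
  | .disj φ ψ, h => max (φ.eval3 K h) (ψ.eval3 K h)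
  | .ex v φ, h => sup3 (Set.range fun u : HU L => φ.eval3 K (Function.update h v u))
  | .all v φ, h => inf3 (Set.range fun u : HU L => φ.eval3 K (Function.update h v u))

/-- Collapsing all false values to `F` and all true values to `T`. -/
def collapse : W → TV3 := fun w =>
  match w.1 with
  | .F _ => .F
  | .zero => .Z
  | .T _ => .T

/-- The collapse of an infinite-valued interpretation. -/
def collapseI (I : Interp L) : Interp3 L := fun A => collapse (I A)

/-- `K` is a three-valued model of `P`. -/
def isModel3 (K : Interp3 L) (P : Program L) : Prop :=
  ∀ r ∈ P.rules, ∀ h : ℕ → HU L, r.body.eval3 K h ≤ r.headAtom.eval3 K h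

/-- The three-valued interpretation `M_{P,3}`. -/
def MP3 (P : Program L) : Interp3 L := collapseI (MP P)

/-- The negation degree of a formula. -/
def Formula.negDeg : Formula L → ℕ
  | .verum => 0
  | .falsum => 0
  | .atom _ _ => 0
  | .neg φ => φ.negDeg + 1
  | .conj φ ψ => max φ.negDeg ψ.negDeg
  | .disj φ ψ => max φ.negDeg ψ.negDeg
  | .all _ φ => φ.negDeg
  | .ex _ φ => φ.negDeg


/-!
For `I ⊑_α J` the values `v = ⟦φ⟧^I_h` and `u = ⟦φ⟧^J_h` are either equal or both lie
in the band between `F_α` and `T_α`, with `F_α ≤ v < T_α` and `F_α < u ≤ T_α`; the three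
claims are read off this relation. It holds for atoms by the definition of `⊑_α` and is
preserved by `min` and `max` in any linear order, by negation because `¬` maps
`[F_α, T_α]` into `(F_α, T_α)`, and by `sup` and `inf` because `T_α` has an immediate
predecessor `T_{α+1}` and `F_α` an immediate successor `F_{α+1}`: a supremum of values
below `T_α` stays below `T_α`, and an infimum of values above `F_α` stays above `F_α`.
-/

section LinearOrder

open OrderDual

variable {X : Type*} [LinearOrder X] {a a' b b' v u v' u' s t : X}

def BandRel (a b v u : X) : Prop := v = u ∨ (v ∈ Set.Ico a b ∧ u ∈ Set.Ioc a b)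

namespace BandRel

theorem refl : BandRel a b v v := Or.inl rfl

theorem dual (h : BandRel a b v u) : BandRel (toDual b) (toDual a) (toDual u) (toDual v) := by
  rcases h with rfl | ⟨⟨hv₁, hv₂⟩, hu₁, hu₂⟩
  · exact refl
  · exact Or.inr ⟨⟨hu₂, hu₁⟩, hv₂, hv₁⟩

theorem of_dual {a b v u : Xᵒᵈ} (h : BandRel a b v u) :
    BandRel (ofDual b) (ofDual a) (ofDual u) (ofDual v) :=
  h.dual

theorem max_left (x : X) (h : BandRel a b v u) : BandRel a b (max x v) (max x u) := by
  rcases h with rfl | ⟨hv, hu⟩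
  · exact refl
  rcases lt_or_ge x b with hxb | hbx
  · rcases le_or_gt x a with hxa | hax
    · rw [max_eq_right (hxa.trans hv.1), max_eq_right (hxa.trans hu.1.le)]
      exact Or.inr ⟨hv, hu⟩
    · exact Or.inr ⟨⟨le_max_of_le_right hv.1, max_lt hxb hv.2⟩,
        lt_max_of_lt_left hax, max_le hxb.le hu.2⟩
  · rw [max_eq_left (hv.2.le.trans hbx), max_eq_left (hu.2.trans hbx)]
    exact refl

theorem max (h : BandRel a b v u) (h' : BandRel a b v' u') :
    BandRel a b (max v v') (max u u') := by
  rcases h with rfl | ⟨hv, hu⟩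
  · exact h'.max_left v
  rcases h' with rfl | ⟨hv', hu'⟩
  · rw [max_comm, max_comm u]
    exact BandRel.max_left v' (Or.inr ⟨hv, hu⟩)
  · exact Or.inr ⟨⟨le_max_of_le_left hv.1, max_lt hv.2 hv'.2⟩,
      lt_max_of_lt_left hu.1, max_le hu.2 hu'.2⟩

theorem min (h : BandRel a b v u) (h' : BandRel a b v' u') :
    BandRel a b (min v v') (min u u') :=
  (h.dual.max h'.dual).of_dual

theorem isLUB {ι : Type*} {f g : ι → X} (hb : b' ⋖ b) (h : ∀ i, BandRel a b (f i) (g i))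
    (hs : IsLUB (Set.range f) s) (ht : IsLUB (Set.range g) t) : BandRel a b s t := by
  by_cases hfg : f = g
  · subst hfg
    exact Or.inl (hs.unique ht)
  obtain ⟨i₀, hi₀⟩ : ∃ i, f i ≠ g i := Function.ne_iff.mp hfg
  obtain ⟨hv₀, hu₀⟩ := (h i₀).resolve_left hi₀
  rcases lt_or_ge s b with hsb | hbs
  · refine Or.inr ⟨⟨hv₀.1.trans (hs.1 ⟨i₀, rfl⟩), hsb⟩, hu₀.1.trans_le (ht.1 ⟨i₀, rfl⟩),
      ht.2 ?_⟩
    rintro _ ⟨i, rfl⟩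
    rcases h i with hi | ⟨-, hu⟩
    · exact hi ▸ (hs.1 ⟨i, rfl⟩).trans hsb.le
    · exact hu.2
  -- `s ≥ b` is attained, since `b` has an immediate predecessor
  obtain ⟨i₁, hi₁⟩ : ∃ i, b ≤ f i := by
    by_contra! hlt
    exact (hs.2 (fun _ ⟨i, hi⟩ => hi ▸ hb.le_of_lt (hlt i))).trans_lt hb.lt |>.not_ge hbs
  have hfg₁ : f i₁ = g i₁ := (h i₁).resolve_right fun hband => hband.1.2.not_ge hi₁
  refine Or.inl (le_antisymm (hs.2 ?_) (ht.2 ?_)) <;> rintro _ ⟨i, rfl⟩ <;>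
    rcases h i with hi | ⟨hv, hu⟩
  · exact hi ▸ ht.1 ⟨i, rfl⟩
  · exact (hv.2.le.trans (hi₁.trans hfg₁.le)).trans (ht.1 ⟨i₁, rfl⟩)
  · exact hi ▸ hs.1 ⟨i, rfl⟩
  · exact hu.2.trans hbs

theorem isGLB {ι : Type*} {f g : ι → X} (ha : a ⋖ a') (h : ∀ i, BandRel a b (f i) (g i))
    (hs : IsGLB (Set.range f) s) (ht : IsGLB (Set.range g) t) : BandRel a b s t := by
  have hdual {k : ι → X} {r : X} (hr : IsGLB (Set.range k) r) :
      IsLUB (Set.range (toDual ∘ k)) (toDual r) :=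
    ⟨fun _ ⟨i, hi⟩ => hi ▸ hr.1 ⟨i, rfl⟩,
      fun _ hx => hr.2 fun _ ⟨i, hi⟩ => hi ▸ hx ⟨i, rfl⟩⟩
  exact (isLUB ha.toDual (fun i => (h i).dual) (hdual ht) (hdual hs)).of_dual

theorem eq_of_right_le (h : BandRel a b v u) (hu : u ≤ a) : v = u :=
  h.resolve_right fun hband => hband.2.1.not_ge hu

theorem eq_of_le_left (h : BandRel a b v u) (hv : b ≤ v) : u = v :=
  (h.resolve_right fun hband => hband.1.2.not_ge hv).symm

theorem eq_iff_eq (h : BandRel a b v u) {w : X} (hw : w < a ∨ b < w) : v = w ↔ u = w := by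
  rcases h with rfl | ⟨hv, hu⟩
  · rfl
  constructor <;> rintro rfl <;> rcases hw with hw | hw
  exacts [(hv.1.not_gt hw).elim, (hv.2.not_gt hw).elim, (hu.1.not_gt hw).elim,
    (hu.2.not_gt hw).elim]

end BandRel

end LinearOrder

namespace W

@[elab_as_elim]
theorem ind {motive : W → Prop} (F : ∀ a h, motive (WF a h)) (Z : motive WZ)
    (T : ∀ a h, motive (WT a h)) (w : W) : motive w := by
  obtain ⟨_ | _ | a, h⟩ := w
  exacts [F _ h, Z, T _ h]

@[simp] theorem WF_val {a : Ordinal} {h} : (WF a h).1 = .F a := rfl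
@[simp] theorem WZ_val : WZ.1 = .zero := rfl
@[simp] theorem WT_val {a : Ordinal} {h} : (WT a h).1 = .T a := rfl

@[simp] theorem Wneg_WF {a : Ordinal} {h} : Wneg (WF a h) = WT (a + 1) (succ_lt_omega1 h) := rfl
@[simp] theorem Wneg_WZ : Wneg WZ = WZ := rfl
@[simp] theorem Wneg_WT {a : Ordinal} {h} : Wneg (WT a h) = WF (a + 1) (succ_lt_omega1 h) := rfl

theorem lt_def {v w : W} : v < w ↔ v.1.lt w.1 := Iff.rfl

theorem le_def {v w : W} : v ≤ w ↔ v.1 = w.1 ∨ v.1.lt w.1 := by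
  rw [le_iff_eq_or_lt, lt_def]
  exact or_congr_left ⟨congrArg Subtype.val, Subtype.ext⟩

theorem WF_le_WF {a b : Ordinal} {ha hb} : WF a ha ≤ WF b hb ↔ a ≤ b := by
  rw [← not_lt, lt_def, ← not_lt]
  rfl

theorem WT_le_WT {a b : Ordinal} {ha hb} : WT a ha ≤ WT b hb ↔ b ≤ a := by
  rw [← not_lt, lt_def, ← not_lt]
  rfl

variable {α : Ordinal} {w : W}

theorem lt_WF_iff (hα : α < omega1) : w < WF α hα ↔ ∃ β < α, w.1 = .F β := by
  induction w using W.ind <;> simp [lt_def, TVPre.lt]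

theorem le_WF_iff (hα : α < omega1) : w ≤ WF α hα ↔ ∃ β ≤ α, w.1 = .F β := by
  induction w using W.ind <;> simp [le_def, TVPre.lt, ← le_iff_eq_or_lt]

theorem WT_lt_iff (hα : α < omega1) : WT α hα < w ↔ ∃ β < α, w.1 = .T β := by
  induction w using W.ind <;> simp [lt_def, TVPre.lt]

theorem WT_le_iff (hα : α < omega1) : WT α hα ≤ w ↔ ∃ β ≤ α, w.1 = .T β := by
  induction w using W.ind <;> simp [le_def, TVPre.lt, le_iff_eq_or_lt (b := α), eq_comm]

theorem degLT_iff (hα : α < omega1) : degLT w α ↔ w < WF α hα ∨ WT α hα < w := by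
  induction w using W.ind <;> simp [degLT, lt_def, TVPre.lt]

theorem WF_covBy (hα : α < omega1) : WF α hα ⋖ WF (α + 1) (succ_lt_omega1 hα) := by
  refine ⟨by simp [lt_def, TVPre.lt], fun w h₁ h₂ => ?_⟩
  induction w using W.ind <;> simp_all [lt_def, TVPre.lt, Order.lt_add_one_iff, ← not_lt]

theorem WT_covBy (hα : α < omega1) : WT (α + 1) (succ_lt_omega1 hα) ⋖ WT α hα := by
  refine ⟨by simp [lt_def, TVPre.lt], fun w h₁ h₂ => ?_⟩
  induction w using W.ind <;> simp_all [lt_def, TVPre.lt, Order.lt_add_one_iff, ← not_lt]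

theorem Wneg_mem_Ioo (hα : α < omega1) (hw : w ∈ Set.Icc (WF α hα) (WT α hα)) :
    Wneg w ∈ Set.Ioo (WF α hα) (WT α hα) := by
  induction w using W.ind <;>
    simp_all [le_def, lt_def, TVPre.lt, Order.lt_add_one_iff, le_iff_eq_or_lt (a := α), eq_comm]

theorem bandRel_Wneg (hα : α < omega1) {v u : W} (h : BandRel (WF α hα) (WT α hα) v u) :
    BandRel (WF α hα) (WT α hα) (Wneg v) (Wneg u) := by
  rcases h with rfl | ⟨hv, hu⟩
  · exact .refl
  · exact Or.inr ⟨Set.Ioo_subset_Ico_self (Wneg_mem_Ioo hα (Set.Ico_subset_Icc_self hv)),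
      Set.Ioo_subset_Ioc_self (Wneg_mem_Ioo hα (Set.Ioc_subset_Icc_self hu))⟩

variable {M : Set W}

theorem bddAbove_FIdx (M : Set W) : BddAbove (FIdx M) :=
  ⟨omega1, fun _ ha => (mem_lt_omega1_of_FIdx ha).le⟩

theorem WF_mem_upperBounds_iff {c : Ordinal} {hc} (hM : ∀ w ∈ M, ∃ a, w.1 = .F a) :
    WF c hc ∈ upperBounds M ↔ sSup (FIdx M) ≤ c := by
  rw [csSup_le_iff' (bddAbove_FIdx M)]
  constructor
  · rintro h a ⟨w, hw, hwa⟩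
    simpa [le_def, TVPre.lt, hwa, ← le_iff_eq_or_lt] using h hw
  · intro h w hw
    obtain ⟨a, hwa⟩ := hM w hw
    simpa [le_def, TVPre.lt, hwa, ← le_iff_eq_or_lt] using h a ⟨w, hw, hwa⟩

theorem isLUB_Wsup (M : Set W) : IsLUB M (Wsup M) := by
  unfold Wsup
  split_ifs with hT hZ hF
  · obtain ⟨w, hw, hwm⟩ := csInf_mem hT
    refine IsGreatest.isLUB ⟨by convert hw; exact (Subtype.ext hwm).symm, fun x hx => ?_⟩
    induction x using W.ind with
    | T a _ => exact WT_le_WT.mpr (csInf_le' ⟨_, hx, rfl⟩)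
    | _ => simp [le_def, TVPre.lt]
  · refine IsGreatest.isLUB ⟨hZ, fun x hx => ?_⟩
    induction x using W.ind with
    | T a _ => exact absurd ⟨a, _, hx, rfl⟩ hT
    | _ => simp [le_def, TVPre.lt]
  all_goals
    have hM (w) (hw : w ∈ M) : ∃ a, w.1 = .F a := by
      induction w using W.ind with
      | F a _ => exact ⟨a, rfl⟩
      | Z => exact absurd hw hZ
      | T a _ => exact absurd ⟨a, _, hw, rfl⟩ hT
  · refine ⟨(WF_mem_upperBounds_iff hM).mpr le_rfl, fun x hx => ?_⟩
    induction x using W.ind with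
    | F c _ => exact WF_le_WF.mpr ((WF_mem_upperBounds_iff hM).mp hx)
    | _ => simp [le_def, TVPre.lt]
  · refine ⟨fun w hw => ?_, fun x hx => ?_⟩
    · obtain ⟨a, hwa⟩ := hM w hw
      simp [le_def, TVPre.lt, hwa]
    · induction x using W.ind with
      | F c hc => exact absurd (((WF_mem_upperBounds_iff hM).mp hx).trans_lt hc) hF
      | _ => simp [le_def, TVPre.lt]

theorem bddAbove_TIdx (M : Set W) : BddAbove (TIdx M) :=
  ⟨omega1, fun _ ha => (mem_lt_omega1_of_TIdx ha).le⟩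

theorem WT_mem_lowerBounds_iff {c : Ordinal} {hc} (hM : ∀ w ∈ M, ∃ a, w.1 = .T a) :
    WT c hc ∈ lowerBounds M ↔ sSup (TIdx M) ≤ c := by
  rw [csSup_le_iff' (bddAbove_TIdx M)]
  constructor
  · rintro h a ⟨w, hw, hwa⟩
    simpa [le_def, TVPre.lt, hwa, le_iff_eq_or_lt (α := Ordinal), eq_comm] using h hw
  · intro h w hw
    obtain ⟨a, hwa⟩ := hM w hw
    simpa [le_def, TVPre.lt, hwa, le_iff_eq_or_lt (α := Ordinal), eq_comm] using
      h a ⟨w, hw, hwa⟩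

theorem isGLB_Winf (M : Set W) : IsGLB M (Winf M) := by
  unfold Winf
  split_ifs with hF hZ hT
  · obtain ⟨w, hw, hwm⟩ := csInf_mem hF
    refine IsLeast.isGLB ⟨by convert hw; exact (Subtype.ext hwm).symm, fun x hx => ?_⟩
    induction x using W.ind with
    | F a _ => exact WF_le_WF.mpr (csInf_le' ⟨_, hx, rfl⟩)
    | _ => simp [le_def, TVPre.lt]
  · refine IsLeast.isGLB ⟨hZ, fun x hx => ?_⟩
    induction x using W.ind with
    | F a _ => exact absurd ⟨a, _, hx, rfl⟩ hF
    | _ => simp [le_def, TVPre.lt]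
  all_goals
    have hM (w) (hw : w ∈ M) : ∃ a, w.1 = .T a := by
      induction w using W.ind with
      | F a _ => exact absurd ⟨a, _, hw, rfl⟩ hF
      | Z => exact absurd hw hZ
      | T a _ => exact ⟨a, rfl⟩
  · refine ⟨(WT_mem_lowerBounds_iff hM).mpr le_rfl, fun x hx => ?_⟩
    induction x using W.ind with
    | T c _ => exact WT_le_WT.mpr ((WT_mem_lowerBounds_iff hM).mp hx)
    | _ => simp [le_def, TVPre.lt]
  · refine ⟨fun w hw => ?_, fun x hx => ?_⟩
    · obtain ⟨a, hwa⟩ := hM w hw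
      simp [le_def, TVPre.lt, hwa]
    · induction x using W.ind with
      | T c hc => exact absurd (((WT_mem_lowerBounds_iff hM).mp hx).trans_lt hc) hT
      | _ => simp [le_def, TVPre.lt]

end W

section Extension

variable {α : Ordinal} {I J : Interp L}

theorem bandRel_of_sqa (hα : α < omega1) (hIJ : sqa α I J) (A : GroundAtom L) :
    BandRel (WF α hα) (WT α hα) (I A) (J A) := by
  obtain ⟨hlt, hF, hT⟩ := hIJ
  have upward {β} (hβ : β ≤ α) :
      ((J A).1 = .F β → (I A).1 = .F β) ∧ ((I A).1 = .T β → (J A).1 = .T β) := by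
    rcases hβ.lt_or_eq with hβ | rfl
    · obtain ⟨hFβ, hTβ⟩ := hlt β hβ β le_rfl
      exact ⟨(Set.ext_iff.mp hFβ A).mpr, (Set.ext_iff.mp hTβ A).mp⟩
    · exact ⟨(hF ·), (hT ·)⟩
  have downward {β} (hβ : β < α) :
      ((I A).1 = .F β → (J A).1 = .F β) ∧ ((J A).1 = .T β → (I A).1 = .T β) := by
    obtain ⟨hFβ, hTβ⟩ := hlt β hβ β le_rfl
    exact ⟨(Set.ext_iff.mp hFβ A).mp, (Set.ext_iff.mp hTβ A).mpr⟩
  by_cases hIJA : I A = J A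
  · exact Or.inl hIJA
  refine Or.inr ⟨⟨?_, ?_⟩, ?_, ?_⟩
  · rw [← not_lt, W.lt_WF_iff]
    rintro ⟨β, hβ, hI⟩
    exact hIJA (Subtype.ext (hI.trans ((downward hβ).1 hI).symm))
  · rw [← not_le, W.WT_le_iff]
    rintro ⟨β, hβ, hI⟩
    exact hIJA (Subtype.ext (hI.trans ((upward hβ).2 hI).symm))
  · rw [← not_le, W.le_WF_iff]
    rintro ⟨β, hβ, hJ⟩
    exact hIJA (Subtype.ext (((upward hβ).1 hJ).trans hJ.symm))
  · rw [← not_lt, W.WT_lt_iff]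
    rintro ⟨β, hβ, hJ⟩
    exact hIJA (Subtype.ext (((downward hβ).2 hJ).trans hJ.symm))

theorem bandRel_eval (hα : α < omega1) (hIJ : sqa α I J) (φ : Formula L) (h : ℕ → HU L) :
    BandRel (WF α hα) (WT α hα) (φ.eval I h) (φ.eval J h) := by
  induction φ generalizing h with
  | verum | falsum => exact .refl
  | atom p ts => exact bandRel_of_sqa hα hIJ _
  | neg φ ih => exact W.bandRel_Wneg hα (ih h)
  | conj φ ψ ihφ ihψ => exact (ihφ h).min (ihψ h)
  | disj φ ψ ihφ ihψ => exact (ihφ h).max (ihψ h)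
  | all v φ ih =>
    exact BandRel.isGLB (W.WF_covBy hα) (fun _ => ih _) (W.isGLB_Winf _) (W.isGLB_Winf _)
  | ex v φ ih =>
    exact BandRel.isLUB (W.WT_covBy hα) (fun _ => ih _) (W.isLUB_Wsup _) (W.isLUB_Wsup _)

end Extension

/-- Extension Theorem I. -/
theorem extension_theorem_I {L : Language} (α : Ordinal) (hα : α < omega1)
    (I J : Interp L) (hIJ : sqa α I J) (φ : Formula L) (h : ℕ → HU L) :
    (∀ w : W, (∃ b ≤ α, w.1 = TVPre.F b) → φ.eval J h = w → φ.eval I h = w) ∧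
    (∀ w : W, (∃ b ≤ α, w.1 = TVPre.T b) → φ.eval I h = w → φ.eval J h = w) ∧
    (∀ w : W, degLT w α → (φ.eval I h = w ↔ φ.eval J h = w)) := by
  have hband := bandRel_eval hα hIJ φ h
  refine ⟨?_, ?_, fun w hw => hband.eq_iff_eq ((W.degLT_iff hα).mp hw)⟩
  · rintro w hw rfl
    exact hband.eq_of_right_le ((W.le_WF_iff hα).mpr hw)
  · rintro w hw rfl
    exact hband.eq_of_le_left ((W.WT_le_iff hα).mpr hw)

end ILP
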